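/- arXiv:1905.11482 — 6 statements merged into one kernel-verified Lean document; each statement's English description precedes it below -/
import Mathlib

section
/- Let d ≥ 2, let g be a symmetric real d×d array of coupling constants with zero diagonal, let H₀ := Σ_{n>m} g_{n,m} B_{n,m}, and suppose the associated graph G₀ is connected. Then the real Lie subalgebra of the d×d complex matrices (viewed as a Lie algebra over ℝ with the commutator bracket) generated by the set {iH₀} ∪ {iP_n : n ∈ Fin d} contains every skew-Hermitian d×d matrix; that is, the system is fully controllable: the generated Lie algebra equals u(d), the Lie algebra of all matrices A with Aᴴ = −A. -/
open Matrix Complex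

attribute [local instance 100] LieRing.ofAssociativeRing

noncomputable section

/-- The diagonal rank-one projection `|n⟩⟨n|`. -/
def pMat (d : ℕ) (n : Fin d) : Matrix (Fin d) (Fin d) ℂ := Matrix.single n n 1

/-- The coupling operator `B_{n,m} = |n⟩⟨m| + |m⟩⟨n|`. -/
def bMat (d : ℕ) (n m : Fin d) : Matrix (Fin d) (Fin d) ℂ :=
  Matrix.single n m 1 + Matrix.single m n 1

/-- The drift Hamiltonian `H₀ = ∑_{n>m} g_{n,m} B_{n,m}`. -/
def drift (d : ℕ) (g : Fin d → Fin d → ℝ) : Matrix (Fin d) (Fin d) ℂ :=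
  ∑ n : Fin d, ∑ m : Fin d, if m < n then (g n m : ℂ) • bMat d n m else 0

/-- The graph `G₀` associated to the coupling constants. -/
def couplingGraph (d : ℕ) (g : Fin d → Fin d → ℝ) : SimpleGraph (Fin d) where
  Adj n m := n ≠ m ∧ g n m ≠ 0 ∧ g m n ≠ 0
  symm := ⟨fun n m h => ⟨h.1.symm, h.2.2, h.2.1⟩⟩
  loopless := ⟨fun n h => h.1 rfl⟩

/-!
The double commutator `⁅iP_m, ⁅iP_n, iH₀⁆⁆` isolates the coupling term `g_{n,m} • iB_{n,m}`, so
`iB_{n,m}` is generated for every edge of `G₀`, and bracketing with `iP_n` turns it into the real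
antisymmetric `C_{n,m} = |n⟩⟨m| - |m⟩⟨n|`. Since `⁅C_{a,b}, C_{b,c}⁆ = C_{a,c}`, connectivity
spreads `C_{n,m}` to all pairs, and then `⁅iP_n, C_{n,m}⁆ = iB_{n,m}`. The `C_{n,m}`, `iB_{n,m}`
and `iP_n` span `u(d)` over `ℝ`: a skew-Hermitian `A` is half the sum of the matrices
`A_{ij} |i⟩⟨j| - conj A_{ij} |j⟩⟨i|`, each a real combination of `C_{i,j}` and `iB_{i,j}`.
-/

section SingleDiag

variable {ι R : Type*} [Fintype ι] [DecidableEq ι] [Ring R]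

lemma lie_single_diag_apply (k : ι) (X : Matrix ι ι R) (i j : ι) :
    ⁅single k k (1 : R), X⁆ i j =
      ((if i = k then 1 else 0) - (if j = k then 1 else 0)) * X i j := by
  rw [Ring.lie_def, Matrix.sub_apply, sub_mul]
  congr 1
  · by_cases h : i = k
    · subst h; simp
    · simp [h]
  · by_cases h : j = k
    · subst h; simp
    · simp [h]

lemma lie_single_diag_lie_single_diag {k l : ι} (hkl : k ≠ l) (X : Matrix ι ι R) :
    ⁅single l l (1 : R), ⁅single k k (1 : R), X⁆⁆ =
      -(single k l (X k l) + single l k (X l k)) := by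
  ext i j
  simp only [lie_single_diag_apply, Matrix.neg_apply, Matrix.add_apply, single_apply]
  by_cases hi : i = k <;> by_cases hj : j = l <;> by_cases hi' : i = l <;>
    by_cases hj' : j = k <;> simp_all [eq_comm]

end SingleDiag

lemma conjTranspose_I_smul_of_isHermitian {ι : Type*} {H : Matrix ι ι ℂ}
    (hH : H.IsHermitian) : (I • H)ᴴ = -(I • H) := by
  rw [conjTranspose_smul, hH.eq, Complex.star_def, conj_I, neg_smul]

lemma sub_conjTranspose_eq_sum_single {ι α : Type*} [Fintype ι] [DecidableEq ι]
    [AddCommGroup α] [StarAddMonoid α] (A : Matrix ι ι α) :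
    A - Aᴴ = ∑ i, ∑ j, (single i j (A i j) - single j i (star (A i j))) := by
  have hAH : Aᴴ = ∑ i, ∑ j, single j i (star (A i j)) := by
    rw [Finset.sum_comm]; exact matrix_eq_sum_single Aᴴ
  simp only [hAH, Finset.sum_sub_distrib]
  congr 1
  exact matrix_eq_sum_single A

def skewHermitianLieSubalgebra (ι : Type*) [Fintype ι] [DecidableEq ι] :
    LieSubalgebra ℝ (Matrix ι ι ℂ) where
  carrier := {A | Aᴴ = -A}
  add_mem' {A B} hA hB := by
    simp only [Set.mem_ofPred_eq, conjTranspose_add] at *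
    rw [hA, hB, neg_add]
  zero_mem' := by simp
  smul_mem' r A hA := by
    simp only [Set.mem_ofPred_eq, conjTranspose_smul, star_trivial] at *
    rw [hA, smul_neg]
  lie_mem' {A B} hA hB := by
    simp only [Set.mem_ofPred_eq, Ring.lie_def, conjTranspose_sub, conjTranspose_mul] at *
    rw [hA, hB, neg_mul_neg, neg_mul_neg, neg_sub]

lemma drift_apply (d : ℕ) (g : Fin d → Fin d → ℝ) (i j : Fin d) :
    drift d g i j = ((if j < i then g i j else if i < j then g j i else 0 : ℝ) : ℂ) := by
  simp only [drift, bMat, Matrix.sum_apply,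
    apply_ite (fun M : Matrix (Fin d) (Fin d) ℂ => M i j), Matrix.smul_apply, Matrix.add_apply,
    single_apply, Matrix.zero_apply, smul_add, ite_and, ite_add_zero, Finset.sum_add_distrib]
  rw [Fintype.sum_eq_single i, Fintype.sum_eq_single j,
    Fintype.sum_eq_single j (f := fun x => ∑ _, _), Fintype.sum_eq_single i]
  · split_ifs <;> simp_all [not_lt_of_gt]
  all_goals intro x hx; simp [hx]

lemma drift_isHermitian (d : ℕ) (g : Fin d → Fin d → ℝ) : (drift d g).IsHermitian :=
  IsHermitian.ext fun i j => by
    simp only [drift_apply, Complex.star_def, conj_ofReal]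
    split_ifs <;> simp_all [not_lt_of_gt]

lemma pMat_isHermitian (d : ℕ) (n : Fin d) : (pMat d n).IsHermitian :=
  IsHermitian.ext fun i j => by
    by_cases hi : n = i <;> by_cases hj : n = j <;> simp [pMat, single_apply, hi, hj]

lemma exists_drift_apply_of_adj {d : ℕ} {g : Fin d → Fin d → ℝ} {n m : Fin d}
    (h : (couplingGraph d g).Adj n m) :
    ∃ r : ℝ, r ≠ 0 ∧ drift d g n m = r ∧ drift d g m n = r := by
  obtain ⟨hnm, hg, hg'⟩ := h
  rcases hnm.lt_or_gt with hlt | hlt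
  · exact ⟨g m n, hg', by simp [drift_apply, hlt, hlt.not_gt]⟩
  · exact ⟨g n m, hg, by simp [drift_apply, hlt, hlt.not_gt]⟩

def cMat (d : ℕ) (n m : Fin d) : Matrix (Fin d) (Fin d) ℂ :=
  single n m 1 - single m n 1

section Generators

variable {d : ℕ} {a b c n m : Fin d}

lemma cMat_self : cMat d n n = 0 := sub_self _

lemma bMat_self : bMat d n n = (2 : ℝ) • pMat d n := by
  rw [bMat, pMat, ← two_smul ℝ]

lemma lie_pMat_bMat (h : n ≠ m) : ⁅pMat d n, bMat d n m⁆ = cMat d n m := by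
  simp only [Ring.lie_def, pMat, bMat, cMat, mul_add, add_mul, single_mul_single_same, mul_one,
    single_mul_single_of_ne _ _ _ _ h, single_mul_single_of_ne _ _ _ _ h.symm]
  abel

lemma lie_pMat_cMat (h : n ≠ m) : ⁅pMat d n, cMat d n m⁆ = bMat d n m := by
  simp only [Ring.lie_def, pMat, cMat, bMat, mul_sub, sub_mul, single_mul_single_same, mul_one,
    single_mul_single_of_ne _ _ _ _ h, single_mul_single_of_ne _ _ _ _ h.symm]
  abel

lemma lie_cMat_cMat (hab : a ≠ b) (hbc : b ≠ c) (hac : a ≠ c) :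
    ⁅cMat d a b, cMat d b c⁆ = cMat d a c := by
  simp only [Ring.lie_def, cMat, mul_sub, sub_mul, single_mul_single_same, mul_one,
    single_mul_single_of_ne _ _ _ _ hab, single_mul_single_of_ne _ _ _ _ hab.symm,
    single_mul_single_of_ne _ _ _ _ hbc, single_mul_single_of_ne _ _ _ _ hbc.symm,
    single_mul_single_of_ne _ _ _ _ hac, single_mul_single_of_ne _ _ _ _ hac.symm]
  abel

lemma lie_pMat_lie_pMat_of_apply_eq {X : Matrix (Fin d) (Fin d) ℂ} {z : ℂ} (h : n ≠ m)
    (hnm : X n m = z) (hmn : X m n = z) :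
    ⁅pMat d m, ⁅pMat d n, X⁆⁆ = -(z • bMat d n m) := by
  rw [pMat, pMat, lie_single_diag_lie_single_diag h, hnm, hmn, bMat, smul_add, smul_single,
    smul_single, smul_eq_mul, mul_one]

lemma single_sub_single_star (i j : Fin d) (z : ℂ) :
    single i j z - single j i (star z) = z.re • cMat d i j + z.im • (I • bMat d i j) := by
  ext p q
  simp only [cMat, bMat, Matrix.add_apply, Matrix.sub_apply, Matrix.smul_apply, single_apply]
  by_cases hp : i = p <;> by_cases hq : j = q <;> by_cases hp' : j = p <;>
    by_cases hq' : i = q <;> subst_vars <;> simp [Complex.ext_iff, *] <;> ring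

end Generators

section LieSpan

variable {d : ℕ} {L : LieSubalgebra ℝ (Matrix (Fin d) (Fin d) ℂ)} {a b c n m : Fin d}

lemma I_smul_bMat_mem_of_adj {g : Fin d → Fin d → ℝ} (hP : ∀ k, I • pMat d k ∈ L)
    (hH : I • drift d g ∈ L) (h : (couplingGraph d g).Adj n m) : I • bMat d n m ∈ L := by
  obtain ⟨r, hr, hnm, hmn⟩ := exists_drift_apply_of_adj h
  have hlie : ⁅I • pMat d m, ⁅I • pMat d n, I • drift d g⁆⁆ = r • (I • bMat d n m) := by
    rw [smul_lie, lie_smul, smul_lie, lie_smul, lie_smul,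
      lie_pMat_lie_pMat_of_apply_eq h.1 hnm hmn, ← Complex.coe_smul]
    match_scalars
    linear_combination (-(r : ℂ) * I) * I_sq
  have hmem := L.smul_mem r⁻¹ (hlie ▸ L.lie_mem (hP m) (L.lie_mem (hP n) hH))
  rwa [smul_smul, inv_mul_cancel₀ hr, one_smul] at hmem

lemma cMat_mem_of_I_smul_bMat_mem (hP : ∀ k, I • pMat d k ∈ L) (hB : I • bMat d n m ∈ L) :
    cMat d n m ∈ L := by
  rcases eq_or_ne n m with rfl | h
  · rw [cMat_self]; exact L.zero_mem
  · have hlie : ⁅I • pMat d n, I • bMat d n m⁆ = -cMat d n m := by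
      rw [smul_lie, lie_smul, lie_pMat_bMat h, smul_smul, I_mul_I, neg_one_smul]
    simpa [hlie] using neg_mem (L.lie_mem (hP n) hB)

lemma I_smul_bMat_mem_of_cMat_mem (hP : ∀ k, I • pMat d k ∈ L) (hC : cMat d n m ∈ L) :
    I • bMat d n m ∈ L := by
  rcases eq_or_ne n m with rfl | h
  · rw [bMat_self, smul_comm]; exact L.smul_mem _ (hP n)
  · simpa [lie_pMat_cMat h] using L.lie_mem (hP n) hC

lemma cMat_mem_trans (hab : cMat d a b ∈ L) (hbc : cMat d b c ∈ L) : cMat d a c ∈ L := by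
  rcases eq_or_ne a b with rfl | hab'
  · exact hbc
  rcases eq_or_ne b c with rfl | hbc'
  · exact hab
  rcases eq_or_ne a c with rfl | hac'
  · rw [cMat_self]; exact L.zero_mem
  simpa [lie_cMat_cMat hab' hbc' hac'] using L.lie_mem hab hbc

lemma cMat_mem_of_reachable {G : SimpleGraph (Fin d)}
    (hG : ∀ a b, G.Adj a b → cMat d a b ∈ L) (h : G.Reachable a b) : cMat d a b ∈ L := by
  rw [SimpleGraph.reachable_iff_reflTransGen] at h
  induction h with
  | refl => rw [cMat_self]; exact L.zero_mem
  | tail _ hbc ih => exact cMat_mem_trans ih (hG _ _ hbc)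

lemma mem_of_conjTranspose_eq_neg (S : Submodule ℝ (Matrix (Fin d) (Fin d) ℂ))
    (hC : ∀ i j, cMat d i j ∈ S) (hB : ∀ i j, I • bMat d i j ∈ S)
    {A : Matrix (Fin d) (Fin d) ℂ} (hA : Aᴴ = -A) : A ∈ S := by
  have hA2 : A = (2 : ℝ)⁻¹ • (A - Aᴴ) := by
    rw [hA, sub_neg_eq_add, ← two_smul ℝ, smul_smul, inv_mul_cancel₀ two_ne_zero, one_smul]
  rw [hA2, sub_conjTranspose_eq_sum_single]
  refine S.smul_mem _ (sum_mem fun i _ => sum_mem fun j _ => ?_)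
  rw [single_sub_single_star]
  exact S.add_mem (S.smul_mem _ (hC i j)) (S.smul_mem _ (hB i j))

end LieSpan

theorem controllability_general (d : ℕ)
    (g : Fin d → Fin d → ℝ)
    (hconn : (couplingGraph d g).Connected) :
    (LieSubalgebra.lieSpan ℝ (Matrix (Fin d) (Fin d) ℂ)
        ({Complex.I • drift d g} ∪ Set.range (fun n : Fin d => Complex.I • pMat d n)) :
      Set (Matrix (Fin d) (Fin d) ℂ)) =
    {A : Matrix (Fin d) (Fin d) ℂ | Aᴴ = -A} := by
  set L := LieSubalgebra.lieSpan ℝ (Matrix (Fin d) (Fin d) ℂ)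
    ({Complex.I • drift d g} ∪ Set.range (fun n : Fin d => Complex.I • pMat d n))
  have hP : ∀ n, I • pMat d n ∈ L := fun n => LieSubalgebra.subset_lieSpan (Or.inr ⟨n, rfl⟩)
  have hH : I • drift d g ∈ L := LieSubalgebra.subset_lieSpan (Or.inl rfl)
  have hC : ∀ n m, cMat d n m ∈ L := fun n m =>
    cMat_mem_of_reachable
      (fun _ _ hadj => cMat_mem_of_I_smul_bMat_mem hP (I_smul_bMat_mem_of_adj hP hH hadj))
      (hconn.preconnected n m)
  have hB : ∀ n m, I • bMat d n m ∈ L := fun n m => I_smul_bMat_mem_of_cMat_mem hP (hC n m)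
  refine Set.Subset.antisymm ?_ fun A hA => mem_of_conjTranspose_eq_neg L.toSubmodule hC hB hA
  show L ≤ skewHermitianLieSubalgebra (Fin d)
  rw [LieSubalgebra.lieSpan_le]
  rintro x (rfl | ⟨n, rfl⟩)
  · exact conjTranspose_I_smul_of_isHermitian (drift_isHermitian d g)
  · exact conjTranspose_I_smul_of_isHermitian (pMat_isHermitian d n)

/-- **Full controllability.** If the graph associated to the drift Hamiltonian is
connected, then the real Lie algebra generated by `iH₀` together with the diagonal
controls `iP_n` is exactly `u(d)`, the Lie algebra of skew-Hermitian matrices. -/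
theorem controllability (d : ℕ) (hd : 2 ≤ d)
    (g : Fin d → Fin d → ℝ)
    (hsymm : ∀ n m, g n m = g m n) (hdiag : ∀ n, g n n = 0)
    (hconn : (couplingGraph d g).Connected) :
    (LieSubalgebra.lieSpan ℝ (Matrix (Fin d) (Fin d) ℂ)
        ({Complex.I • drift d g} ∪ Set.range (fun n : Fin d => Complex.I • pMat d n)) :
      Set (Matrix (Fin d) (Fin d) ℂ)) =
    {A : Matrix (Fin d) (Fin d) ℂ | Aᴴ = -A} :=
  controllability_general d g hconn

end
end

section
/- Let H be a d×d complex matrix and A ⊆ Fin d a subset. For S ⊆ A let D_S be the diagonal ±1 matrix with entry −1 at positions in S and +1 elsewhere. Then 2^{−|A|} Σ_{S ⊆ A} D_S H D_S = H', where H' is the matrix with entries H'_{n,m} = H_{n,m} if n = m or (n ∉ A and m ∉ A), and H'_{n,m} = 0 otherwise. In particular, if H has zero diagonal and A = Fin d \ {n, m} for distinct n, m, the average equals H_{n,m}|n⟩⟨m| + H_{m,n}|m⟩⟨n|, i.e., the decoupling sequence reduces the graph of H to the single edge (n,m). -/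
open Matrix Complex

noncomputable section

/-- The diagonal `±1` sign matrix attached to a subset `S`: entry `−1` at positions in
`S` and `+1` elsewhere. -/
def signMat (d : ℕ) (S : Finset (Fin d)) : Matrix (Fin d) (Fin d) ℂ :=
  Matrix.diagonal fun n => if n ∈ S then (-1 : ℂ) else 1

open Finset

section CharacterSum

variable {ι R : Type*} [DecidableEq ι] [CommRing R]

/- Writing each sign as a product over `S`, the sum over `S ⊆ A` factors as
`∏ i ∈ A, (1 + c i)` with `c i = ±1`, which vanishes as soon as one `c i = -1`. -/
theorem sum_powerset_sign_mul_sign (A : Finset ι) (n m : ι) :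
    ∑ S ∈ A.powerset, (if n ∈ S then (-1 : R) else 1) * (if m ∈ S then -1 else 1) =
      if n = m ∨ (n ∉ A ∧ m ∉ A) then 2 ^ A.card else 0 := by
  have hfactor :
      ∑ S ∈ A.powerset, (if n ∈ S then (-1 : R) else 1) * (if m ∈ S then -1 else 1) =
        ∏ i ∈ A, (1 + (if i = n then (-1 : R) else 1) * (if i = m then -1 else 1)) := by
    rw [prod_one_add]
    refine sum_congr rfl fun S _ => ?_
    rw [prod_mul_distrib, prod_ite_eq', prod_ite_eq']
  rw [hfactor]
  split_ifs with h
  · have htwo : ∀ i ∈ A,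
        1 + (if i = n then (-1 : R) else 1) * (if i = m then -1 else 1) = 2 := by
      intro i hi
      rcases h with rfl | ⟨hn, hm⟩
      · split_ifs <;> norm_num
      · rw [if_neg (ne_of_mem_of_not_mem hi hn), if_neg (ne_of_mem_of_not_mem hi hm)]
        norm_num
    rw [prod_congr rfl htwo, prod_const]
  · push Not at h
    obtain ⟨hnm, hA⟩ := h
    by_cases hn : n ∈ A
    · exact prod_eq_zero hn (by simp [hnm])
    · exact prod_eq_zero (hA hn) (by simp [hnm.symm])

end CharacterSum

theorem signMat_mul_mul_signMat_apply {d : ℕ} (S : Finset (Fin d))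
    (H : Matrix (Fin d) (Fin d) ℂ) (n m : Fin d) :
    (signMat d S * H * signMat d S) n m =
      (if n ∈ S then -1 else 1) * (if m ∈ S then -1 else 1) * H n m := by
  simp only [signMat, mul_diagonal, diagonal_mul]
  ring

theorem average_signMat_conj {d : ℕ} (H : Matrix (Fin d) (Fin d) ℂ) (A : Finset (Fin d)) :
    (1 / 2 ^ A.card : ℂ) • ∑ S ∈ A.powerset, signMat d S * H * signMat d S =
      Matrix.of fun n m => if n = m ∨ (n ∉ A ∧ m ∉ A) then H n m else 0 := by
  ext n m
  simp only [Matrix.smul_apply, Matrix.sum_apply, signMat_mul_mul_signMat_apply, ← sum_mul,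
    sum_powerset_sign_mul_sign, of_apply, smul_eq_mul]
  split_ifs
  · field_simp
  · simp

theorem mask_compl_pair_eq_edge {d : ℕ} (H : Matrix (Fin d) (Fin d) ℂ) {n m : Fin d}
    (hnm : n ≠ m) (hdiag : ∀ a, H a a = 0) :
    (Matrix.of fun a b =>
        if a = b ∨ (a ∉ univ \ {n, m} ∧ b ∉ univ \ {n, m}) then H a b else 0) =
      H n m • Matrix.single n m 1 + H m n • Matrix.single m n 1 := by
  ext a b
  simp only [of_apply, mem_sdiff, mem_univ, mem_insert, mem_singleton, true_and, not_not,
    Matrix.add_apply, Matrix.smul_apply, single_apply, smul_eq_mul, mul_ite, mul_one, mul_zero]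
  split_ifs <;> grind

/-- **Dynamical decoupling of a set of vertices.** Averaging the conjugations of `H` by
all sign matrices `D_S`, `S ⊆ A`, kills exactly the entries `(n,m)` with `n ≠ m` meeting
`A`. In particular, if `H` has zero diagonal and `A = univ \ {n, m}`, the average equals
`H_{n,m}|n⟩⟨m| + H_{m,n}|m⟩⟨n|`, i.e. the graph of `H` is reduced to the single edge
`(n,m)`. -/
theorem decoupling_average (d : ℕ) (H : Matrix (Fin d) (Fin d) ℂ) (A : Finset (Fin d)) :
    ((1 / 2 ^ A.card : ℂ) • ∑ S ∈ A.powerset, signMat d S * H * signMat d S =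
      Matrix.of fun n m => if n = m ∨ (n ∉ A ∧ m ∉ A) then H n m else 0) ∧
    (∀ n m : Fin d, n ≠ m → (∀ a, H a a = 0) → A = Finset.univ \ {n, m} →
      (1 / 2 ^ A.card : ℂ) • ∑ S ∈ A.powerset, signMat d S * H * signMat d S =
        H n m • Matrix.single n m 1 + H m n • Matrix.single m n 1) := by
  refine ⟨average_signMat_conj H A, fun n m hnm hdiag hA => ?_⟩
  rw [average_signMat_conj, hA, mask_compl_pair_eq_edge H hnm hdiag]

end
end

section
/- Let d ≥ 3 and let n, m, k ∈ Fin d be pairwise distinct. Then conjugating the coupling B_{m,k} by the SWAP gate on (n,m) propagates the edge, up to a diagonal phase: exp(i(π/2) B_{n,m}) · B_{m,k} · exp(−i(π/2) B_{n,m}) = exp(i(π/2) P_n) · B_{n,k} · exp(−i(π/2) P_n). -/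
/-!
An element `x` with `x ^ 3 = x` splits as `x = e - f` with `e = (x² + x)/2` and `f = (x² - x)/2`
orthogonal idempotents, so `exp (z • x) = 1 + sinh z • x + (cosh z - 1) • x²`. At `z = ±iπ/2` this
is `1 ± i x - x²`. Both `B_{n,m}` and `P_n` satisfy `X³ = X`, and multiplying out the matrix units
shows that both sides of the identity equal `i (|n⟩⟨k| - |k⟩⟨n|)`.
-/

open Matrix Complex Real

noncomputable section

section BanachAlgebra

variable {𝔸 : Type*} [NormedRing 𝔸] [NormedAlgebra ℂ 𝔸] [CompleteSpace 𝔸]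

theorem IsIdempotentElem.exp_smul {e : 𝔸} (he : IsIdempotentElem e) (z : ℂ) :
    NormedSpace.exp (z • e) = 1 + (Complex.exp z - 1) • e := by
  have hscalar : HasSum (fun n => (((Nat.factorial n)⁻¹ : ℂ) • z ^ n) • e) (Complex.exp z • e) := by
    rw [Complex.exp_eq_exp_ℂ]
    exact (NormedSpace.exp_series_hasSum_exp' (𝕂 := ℂ) z).smul_const e
  have hseries : HasSum (fun n => ((Nat.factorial n)⁻¹ : ℂ) • (z • e) ^ n)
      (Complex.exp z • e + (1 - e)) := by
    convert hscalar.add (hasSum_ite_eq 0 (1 - e)) using 1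
    funext n
    cases n with
    | zero => simp
    | succ n => simp [smul_pow, he.pow_succ_eq, smul_smul]
  rw [(NormedSpace.exp_series_hasSum_exp' (z • e)).unique hseries]
  module

theorem exp_smul_add_smul_of_mul_eq_zero {e f : 𝔸} (he : IsIdempotentElem e)
    (hf : IsIdempotentElem f) (hef : e * f = 0) (hfe : f * e = 0) (a b : ℂ) :
    NormedSpace.exp (a • e + b • f) = 1 + (Complex.exp a - 1) • e + (Complex.exp b - 1) • f := by
  have hcomm : Commute (a • e) (b • f) := by
    simp only [Commute, SemiconjBy, smul_mul_smul_comm, hef, hfe, smul_zero]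
  let _ : NormedAlgebra ℚ 𝔸 := NormedAlgebra.restrictScalars ℚ ℂ 𝔸
  rw [NormedSpace.exp_add_of_commute hcomm, he.exp_smul, hf.exp_smul]
  simp only [add_mul, mul_add, one_mul, mul_one, smul_mul_smul_comm, hef, smul_zero, add_zero]

theorem exp_smul_of_pow_three_eq_self {x : 𝔸} (hx : x ^ 3 = x) (z : ℂ) :
    NormedSpace.exp (z • x) = 1 + Complex.sinh z • x + (Complex.cosh z - 1) • x ^ 2 := by
  have hxx : x * x = x ^ 2 := (sq x).symm
  have hx2x : x ^ 2 * x = x := by rw [← pow_succ, hx]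
  have hxx2 : x * x ^ 2 = x := by rw [← pow_succ', hx]
  have hx2x2 : x ^ 2 * x ^ 2 = x ^ 2 := by rw [← pow_add, pow_succ, hx, sq]
  set e : 𝔸 := (2⁻¹ : ℂ) • (x ^ 2 + x)
  set f : 𝔸 := (2⁻¹ : ℂ) • (x ^ 2 - x)
  have he : IsIdempotentElem e := by
    simp only [IsIdempotentElem, e, smul_mul_smul_comm, add_mul, mul_add, hx2x, hxx2, hx2x2, hxx]
    module
  have hf : IsIdempotentElem f := by
    simp only [IsIdempotentElem, f, smul_mul_smul_comm, sub_mul, mul_sub, hx2x, hxx2, hx2x2, hxx]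
    module
  have hef : e * f = 0 := by
    simp only [e, f, smul_mul_smul_comm, add_mul, mul_sub, hx2x, hxx2, hx2x2, hxx]
    module
  have hfe : f * e = 0 := by
    simp only [e, f, smul_mul_smul_comm, sub_mul, mul_add, hx2x, hxx2, hx2x2, hxx]
    module
  have hsplit : z • x = z • e + (-z) • f := by simp only [e, f]; module
  have hsinh : Complex.sinh z = (Complex.exp z - Complex.exp (-z)) / 2 := by
    rw [← Complex.two_sinh]; ring
  have hcosh : Complex.cosh z = (Complex.exp z + Complex.exp (-z)) / 2 := by
    rw [← Complex.two_cosh]; ring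
  rw [hsplit, exp_smul_add_smul_of_mul_eq_zero he hf hef hfe, hsinh, hcosh]
  match_scalars <;> ring

end BanachAlgebra

namespace Matrix

variable {ι : Type*} [Fintype ι] [DecidableEq ι]

-- `NormedSpace.exp` does not depend on the norm, so any algebra norm on matrices will do.
theorem exp_smul_of_pow_three_eq_self {A : Matrix ι ι ℂ} (hA : A ^ 3 = A) (z : ℂ) :
    NormedSpace.exp (z • A) = 1 + Complex.sinh z • A + (Complex.cosh z - 1) • A ^ 2 := by
  let _ := Matrix.linftyOpNormedRing (n := ι) (α := ℂ)
  let _ := Matrix.linftyOpNormedAlgebra (n := ι) (α := ℂ) (R := ℂ)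
  exact _root_.exp_smul_of_pow_three_eq_self hA z

theorem exp_I_mul_pi_div_two_smul {A : Matrix ι ι ℂ} (hA : A ^ 3 = A) :
    NormedSpace.exp ((I * ((π / 2 : ℝ) : ℂ)) • A) = 1 + I • A - A ^ 2 := by
  rw [exp_smul_of_pow_three_eq_self hA, mul_comm, Complex.sinh_mul_I, Complex.cosh_mul_I,
    ← Complex.ofReal_sin, ← Complex.ofReal_cos, Real.sin_pi_div_two, Real.cos_pi_div_two]
  module

theorem exp_neg_I_mul_pi_div_two_smul {A : Matrix ι ι ℂ} (hA : A ^ 3 = A) :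
    NormedSpace.exp ((-(I * ((π / 2 : ℝ) : ℂ))) • A) = 1 - I • A - A ^ 2 := by
  have hnegA : (-A) ^ 3 = -A := by rw [neg_pow, hA]; norm_num
  rw [neg_smul, ← smul_neg, exp_I_mul_pi_div_two_smul hnegA, neg_sq]
  module

end Matrix

section Couplings

variable {d : ℕ}

theorem pMat_pow_three (n : Fin d) : pMat d n ^ 3 = pMat d n := by
  simp [pMat, pow_succ]

theorem bMat_sq {n m : Fin d} (hnm : n ≠ m) : bMat d n m ^ 2 = pMat d n + pMat d m := by
  simp [sq, bMat, pMat, add_mul, mul_add, single_mul_single_of_ne, hnm, hnm.symm, add_comm]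

theorem bMat_pow_three {n m : Fin d} (hnm : n ≠ m) : bMat d n m ^ 3 = bMat d n m := by
  rw [pow_succ, bMat_sq hnm]
  simp [bMat, pMat, add_mul, mul_add, single_mul_single_of_ne, hnm, hnm.symm, add_comm]

theorem swap_conj_bMat {n m k : Fin d} (hnm : n ≠ m) (hnk : n ≠ k) (hmk : m ≠ k) :
    (1 + I • bMat d n m - bMat d n m ^ 2) * bMat d m k * (1 - I • bMat d n m - bMat d n m ^ 2) =
      I • (single n k 1 - single k n 1) := by
  rw [bMat_sq hnm]
  simp only [bMat, pMat, add_mul, mul_add, sub_mul, mul_sub, smul_mul_assoc, mul_smul_comm,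
    one_mul, mul_one, zero_mul, single_mul_single_same, single_mul_single_of_ne,
    hnm, hnm.symm, hnk, hnk.symm, hmk, hmk.symm, ne_eq, not_false_iff]
  module

theorem phase_conj_bMat {n k : Fin d} (hnk : n ≠ k) :
    (1 + I • pMat d n - pMat d n ^ 2) * bMat d n k * (1 - I • pMat d n - pMat d n ^ 2) =
      I • (single n k 1 - single k n 1) := by
  simp only [sq, bMat, pMat, add_mul, mul_add, sub_mul, mul_sub, smul_mul_assoc, mul_smul_comm,
    one_mul, mul_one, zero_mul, single_mul_single_same, single_mul_single_of_ne,
    hnk, hnk.symm, ne_eq, not_false_iff]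
  module

end Couplings

theorem swap_propagates_edge_general (d : ℕ) (n m k : Fin d)
    (hnm : n ≠ m) (hnk : n ≠ k) (hmk : m ≠ k) :
    NormedSpace.exp ((Complex.I * ((Real.pi / 2 : ℝ) : ℂ)) • bMat d n m) *
        bMat d m k *
        NormedSpace.exp ((-(Complex.I * ((Real.pi / 2 : ℝ) : ℂ))) • bMat d n m) =
      NormedSpace.exp ((Complex.I * ((Real.pi / 2 : ℝ) : ℂ)) • pMat d n) *
        bMat d n k *
        NormedSpace.exp ((-(Complex.I * ((Real.pi / 2 : ℝ) : ℂ))) • pMat d n) := by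
  rw [exp_I_mul_pi_div_two_smul (bMat_pow_three hnm),
    exp_neg_I_mul_pi_div_two_smul (bMat_pow_three hnm),
    exp_I_mul_pi_div_two_smul (pMat_pow_three n), exp_neg_I_mul_pi_div_two_smul (pMat_pow_three n),
    swap_conj_bMat hnm hnk hmk, phase_conj_bMat hnk]

/-- **Edge propagation by SWAP gates.** Conjugating `B_{m,k}` by the SWAP gate on
`(n,m)` produces `B_{n,k}` up to conjugation by a diagonal phase. -/
theorem swap_propagates_edge (d : ℕ) (hd : 3 ≤ d) (n m k : Fin d)
    (hnm : n ≠ m) (hnk : n ≠ k) (hmk : m ≠ k) :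
    NormedSpace.exp ((Complex.I * ((Real.pi / 2 : ℝ) : ℂ)) • bMat d n m) *
        bMat d m k *
        NormedSpace.exp ((-(Complex.I * ((Real.pi / 2 : ℝ) : ℂ))) • bMat d n m) =
      NormedSpace.exp ((Complex.I * ((Real.pi / 2 : ℝ) : ℂ)) • pMat d n) *
        bMat d n k *
        NormedSpace.exp ((-(Complex.I * ((Real.pi / 2 : ℝ) : ℂ))) • pMat d n) :=
  swap_propagates_edge_general d n m k hnm hnk hmk

end
end

section
/- Let H₀, H₁, …, H_K be Hermitian d×d complex matrices, let f₁, …, f_K : ℝ → ℝ, let T ≥ 0, and let U : ℝ → (d×d complex matrices) satisfy U(0) = 1 and, for every t ∈ [0, T], the Schrödinger equation U'(t) = −i (H₀ + Σ_{k=1}^K f_k(t) H_k) U(t) (where U is differentiable at every such t, and each f_k is continuous on [0,T]). Suppose V is a unitary d×d matrix commuting with every control: H_k V = V H_k for all k = 1, …, K. Then ‖U(T) V − V U(T)‖ ≤ T · ‖H₀ V − V H₀‖, where ‖A‖ := √(tr(AᴴA)) is the Frobenius norm. -/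
/-!
Pass to the interaction picture `W t = (U t)ᴴ * V * U t`. The Schrödinger equation gives
`W' = i • (U t)ᴴ * (H t * V - V * H t) * U t`; for `V = 1` this vanishes, so `U t` stays unitary.
As the Frobenius norm is unitarily invariant, `‖W'‖ = ‖H t * V - V * H t‖ = ‖H₀ * V - V * H₀‖`,
the control terms dropping out because they commute with `V`. The mean value inequality then
bounds `‖U T * V - V * U T‖ = ‖W T - W 0‖` by `T * ‖H₀ * V - V * H₀‖`.
-/

open Matrix Complex

noncomputable section

attribute [local instance] Matrix.frobeniusNormedAddCommGroup Matrix.frobeniusNormedSpace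

/-- Frobenius (Hilbert–Schmidt) norm `‖A‖ = √(tr(AᴴA))`. -/
def frob {d : ℕ} (A : Matrix (Fin d) (Fin d) ℂ) : ℝ :=
  Real.sqrt ((Aᴴ * A).trace.re)

attribute [local instance] Matrix.frobeniusNormedRing Matrix.frobeniusNormedAlgebra

section Frobenius

variable {m n : Type*} [Fintype m] [Fintype n]

theorem frobenius_norm_sq_eq_re_trace (A : Matrix m n ℂ) : ‖A‖ ^ 2 = (Aᴴ * A).trace.re := by
  rw [frobenius_norm_def, ← Real.rpow_natCast, ← Real.rpow_mul (by positivity), Nat.cast_ofNat,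
    one_div, inv_mul_cancel₀ two_ne_zero, Real.rpow_one,
    Matrix.trace, Complex.re_sum, Finset.sum_comm]
  refine Finset.sum_congr rfl fun i _ => ?_
  rw [Matrix.diag_apply, Matrix.mul_apply, Complex.re_sum]
  refine Finset.sum_congr rfl fun j _ => ?_
  simp [← Complex.normSq_eq_norm_sq, Complex.normSq_apply, Complex.mul_re]

theorem frob_eq_norm {d : ℕ} (A : Matrix (Fin d) (Fin d) ℂ) : frob A = ‖A‖ := by
  rw [frob, ← frobenius_norm_sq_eq_re_trace, Real.sqrt_sq (norm_nonneg A)]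

variable [DecidableEq n] {U : Matrix n n ℂ}

theorem frobenius_norm_unitary_mul (hU : U ∈ unitary (Matrix n n ℂ)) (A : Matrix n m ℂ) :
    ‖U * A‖ = ‖A‖ := by
  refine (sq_eq_sq₀ (norm_nonneg _) (norm_nonneg _)).1 ?_
  rw [frobenius_norm_sq_eq_re_trace, frobenius_norm_sq_eq_re_trace, conjTranspose_mul,
    Matrix.mul_assoc, ← Matrix.mul_assoc Uᴴ, ← star_eq_conjTranspose,
    Unitary.star_mul_self_of_mem hU, Matrix.one_mul]

theorem frobenius_norm_mul_unitary (A : Matrix m n ℂ) (hU : U ∈ unitary (Matrix n n ℂ)) :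
    ‖A * U‖ = ‖A‖ := by
  rw [← frobenius_norm_conjTranspose, conjTranspose_mul, ← star_eq_conjTranspose,
    frobenius_norm_unitary_mul (Unitary.star_mem hU), frobenius_norm_conjTranspose]

end Frobenius

section Schrodinger

variable {n : Type*} [Fintype n] [DecidableEq n] {H U : ℝ → Matrix n n ℂ} {t T : ℝ}

theorem hasDerivAt_conjTranspose_mul_mul_of_schrodinger (hH : (H t).IsHermitian)
    (hU : HasDerivAt U (-I • (H t * U t)) t) (V : Matrix n n ℂ) :
    HasDerivAt (fun s ↦ (U s)ᴴ * V * U s) (I • ((U t)ᴴ * (H t * V - V * H t) * U t)) t := by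
  have hUstar : HasDerivAt (fun s ↦ (U s)ᴴ) (I • ((U t)ᴴ * H t)) t := by
    refine hU.star.congr_deriv ?_
    rw [star_smul, star_mul, star_eq_conjTranspose (H t), hH.eq]
    simp [star_eq_conjTranspose]
  refine ((hUstar.mul_const V).mul hU).congr_deriv ?_
  rw [smul_mul_assoc, smul_mul_assoc, mul_smul_comm, neg_smul, ← sub_eq_add_neg, ← smul_sub]
  noncomm_ring

theorem unitary_of_schrodinger (hH : ∀ t ∈ Set.Icc 0 T, (H t).IsHermitian)
    (hU : ∀ t ∈ Set.Icc 0 T, HasDerivAt U (-I • (H t * U t)) t) (hU0 : U 0 = 1) :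
    ∀ t ∈ Set.Icc 0 T, U t ∈ unitary (Matrix n n ℂ) := by
  intro t ht
  have hconst := norm_image_sub_le_of_norm_deriv_le_segment' (C := 0)
    (f := fun s ↦ (U s)ᴴ * 1 * U s)
    (fun s hs ↦
      (hasDerivAt_conjTranspose_mul_mul_of_schrodinger (hH s hs) (hU s hs) 1).hasDerivWithinAt)
    (fun s _ ↦ by simp) t ht
  rw [zero_mul, norm_le_zero_iff, sub_eq_zero] at hconst
  simp only [mul_one, hU0, conjTranspose_one] at hconst
  exact mem_unitaryGroup_iff'.2 hconst

theorem norm_commutator_le_of_schrodinger (hT : 0 ≤ T)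
    (hH : ∀ t ∈ Set.Icc 0 T, (H t).IsHermitian)
    (hU : ∀ t ∈ Set.Icc 0 T, HasDerivAt U (-I • (H t * U t)) t) (hU0 : U 0 = 1)
    {V : Matrix n n ℂ} {C : ℝ} (hC : ∀ t ∈ Set.Icc 0 T, ‖H t * V - V * H t‖ ≤ C) :
    ‖U T * V - V * U T‖ ≤ T * C := by
  have hunit := unitary_of_schrodinger hH hU hU0
  have hTmem : T ∈ Set.Icc 0 T := Set.right_mem_Icc.2 hT
  have hdrift := norm_image_sub_le_of_norm_deriv_le_segment' (C := C)
    (f := fun s ↦ (U s)ᴴ * V * U s)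
    (fun t ht ↦
      (hasDerivAt_conjTranspose_mul_mul_of_schrodinger (hH t ht) (hU t ht) V).hasDerivWithinAt)
    (fun t ht ↦ by
      have hUt := hunit t (Set.Ico_subset_Icc_self ht)
      rw [norm_smul, Complex.norm_I, one_mul, ← star_eq_conjTranspose,
        frobenius_norm_mul_unitary _ hUt, frobenius_norm_unitary_mul (Unitary.star_mem hUt)]
      exact hC t (Set.Ico_subset_Icc_self ht)) T hTmem
  have hcomm : U T * V - V * U T = U T * ((U 0)ᴴ * V * U 0 - (U T)ᴴ * V * U T) := by
    rw [hU0, conjTranspose_one, Matrix.one_mul, Matrix.mul_one, mul_sub, ← mul_assoc, ← mul_assoc,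
      ← star_eq_conjTranspose, Unitary.mul_star_self_of_mem (hunit T hTmem), Matrix.one_mul]
  calc ‖U T * V - V * U T‖ = ‖(U T)ᴴ * V * U T - (U 0)ᴴ * V * U 0‖ := by
        rw [hcomm, frobenius_norm_unitary_mul (hunit T hTmem), norm_sub_rev]
    _ ≤ C * (T - 0) := hdrift
    _ = T * C := by ring

end Schrodinger

theorem commutator_speed_limit_general (d K : ℕ)
    (H₀ : Matrix (Fin d) (Fin d) ℂ) (hH₀ : H₀ᴴ = H₀)
    (Hc : Fin K → Matrix (Fin d) (Fin d) ℂ) (hHc : ∀ k, (Hc k)ᴴ = Hc k)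
    (f : Fin K → ℝ → ℝ) (T : ℝ) (hT : 0 ≤ T)
    (U : ℝ → Matrix (Fin d) (Fin d) ℂ) (hU0 : U 0 = 1)
    (hU : ∀ t ∈ Set.Icc (0 : ℝ) T,
      HasDerivAt U
        ((-Complex.I) • ((H₀ + ∑ k : Fin K, ((f k t : ℝ) : ℂ) • Hc k) * U t)) t)
    (V : Matrix (Fin d) (Fin d) ℂ)
    (hVcomm : ∀ k, Hc k * V = V * Hc k) :
    frob (U T * V - V * U T) ≤ T * frob (H₀ * V - V * H₀) := by
  set H : ℝ → Matrix (Fin d) (Fin d) ℂ := fun t ↦ H₀ + ∑ k, ((f k t : ℝ) : ℂ) • Hc k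
  have hH : ∀ t ∈ Set.Icc 0 T, (H t).IsHermitian := fun t _ ↦ by
    simp only [IsHermitian, H, conjTranspose_add, conjTranspose_sum, conjTranspose_smul, hH₀, hHc,
      Complex.star_def, Complex.conj_ofReal]
  have hcomm : ∀ t, H t * V - V * H t = H₀ * V - V * H₀ := fun t ↦ by
    simp only [H, add_mul, mul_add, Finset.sum_mul, Finset.mul_sum, smul_mul_assoc,
      mul_smul_comm, hVcomm]
    abel
  rw [frob_eq_norm, frob_eq_norm]
  exact norm_commutator_le_of_schrodinger hT hH hU hU0 fun t _ ↦ (congrArg norm (hcomm t)).le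

/-- **Speed limit from symmetries of the controls.** If `U` solves the controlled
Schrödinger equation `U' = −i(H₀ + ∑ₖ fₖ(t) Hₖ)U`, `U(0) = 1`, and the unitary `V`
commutes with every control Hamiltonian `Hₖ`, then
`‖U(T)V − VU(T)‖ ≤ T‖H₀V − VH₀‖` in the Frobenius norm. -/
theorem commutator_speed_limit (d K : ℕ)
    (H₀ : Matrix (Fin d) (Fin d) ℂ) (hH₀ : H₀ᴴ = H₀)
    (Hc : Fin K → Matrix (Fin d) (Fin d) ℂ) (hHc : ∀ k, (Hc k)ᴴ = Hc k)
    (f : Fin K → ℝ → ℝ) (T : ℝ) (hT : 0 ≤ T)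
    (hf : ∀ k, ContinuousOn (f k) (Set.Icc 0 T))
    (U : ℝ → Matrix (Fin d) (Fin d) ℂ) (hU0 : U 0 = 1)
    (hU : ∀ t ∈ Set.Icc (0 : ℝ) T,
      HasDerivAt U
        ((-Complex.I) • ((H₀ + ∑ k : Fin K, ((f k t : ℝ) : ℂ) • Hc k) * U t)) t)
    (V : Matrix (Fin d) (Fin d) ℂ) (hV : Vᴴ * V = 1)
    (hVcomm : ∀ k, Hc k * V = V * Hc k) :
    frob (U T * V - V * U T) ≤ T * frob (H₀ * V - V * H₀) :=
  commutator_speed_limit_general d K H₀ hH₀ Hc hHc f T hT U hU0 hU V hVcomm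

end
end

section
/- Let d ≥ 2, J := 1/√(2(d−1)), and H₀ := J Σ_{j=0}^{d−2} B_{j,j+1}. Let f : ℝ → (Fin d → ℝ) be control fields continuous on [0,T], T ≥ 0, and let U : ℝ → (d×d complex matrices) satisfy U(0) = 1 and, for every t ∈ [0,T], U'(t) = −i (H₀ + Σ_{j∈Fin d} f_j(t) P_j) U(t). If U(T) = exp(−i(π/2) B_{0,d−1}) (the SWAP operation between the first and last levels), then T ≥ √2 (d−1). -/
open Matrix Complex Real

noncomputable section

attribute [local instance] Matrix.frobeniusNormedAddCommGroup Matrix.frobeniusNormedSpace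

/-- The tight-binding drift Hamiltonian `H₀ = J ∑_{j=0}^{d−2} B_{j,j+1}` with
`J = 1/√(2(d−1))`. -/
def tightBinding (d : ℕ) : Matrix (Fin d) (Fin d) ℂ :=
  (1 / Real.sqrt (2 * ((d : ℝ) - 1))) •
    ∑ j : Fin (d - 1),
      bMat d ⟨j.val, lt_of_lt_of_le j.isLt (Nat.sub_le d 1)⟩
             ⟨j.val + 1, by have h := j.isLt; omega⟩

/-!
Follow the column `ψ(t) = U(t) e₀` and its populations `p_j = |ψ_j|²`, whose total stays `1`.
For real weights `x_j`, the Schrödinger equation gives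
`d/dt ∑ x_j p_j = 2J ∑_m (x_m − x_{m+1}) Im(ψ̄_m ψ_{m+1})`: the diagonal controls drop out.
Choosing `x_{m+1} − x_m = √((m+1)(d−1−m))`, AM–GM bounds the `m`-th term by
`J ((d−1−m) p_m + (m+1) p_{m+1})`, and these bounds add up to exactly `J (d−1)`.
The SWAP carries all the population from level `0`, of weight `0`, to level `d−1`, of weight at
least `(d−1)^{3/2}`; hence `(d−1)^{3/2} ≤ J (d−1) T`, that is `T ≥ √2 (d−1)`.
-/

section

variable {d : ℕ} {n m : Fin d}

lemma bMat_mul_self (h : n ≠ m) : bMat d n m * bMat d n m = pMat d n + pMat d m := by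
  simp [bMat, pMat, add_mul, mul_add, h, h.symm, add_comm]

lemma bMat_pow_odd (h : n ≠ m) (k : ℕ) : bMat d n m ^ (2 * k + 1) = bMat d n m := by
  induction k with
  | zero => simp
  | succ k ih =>
    rw [show 2 * (k + 1) + 1 = 2 * k + 1 + 2 by ring, pow_add, ih, sq, ← mul_assoc,
      bMat_mul_self h]
    simp [bMat, pMat, add_mul, mul_add, h, h.symm]

lemma bMat_pow_even_apply (h : n ≠ m) (k : ℕ) : (bMat d n m ^ (2 * k)) m n = 0 := by
  cases k with
  | zero => simp [Matrix.one_apply_ne h.symm]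
  | succ k =>
    rw [mul_add_one, pow_succ, bMat_pow_odd h, bMat_mul_self h]
    simp [pMat, Matrix.single_apply_of_ne, h, h.symm]

lemma exp_smul_bMat_apply (h : n ≠ m) (z : ℂ) :
    NormedSpace.exp (z • bMat d n m) m n = Complex.sinh z := by
  let := Matrix.frobeniusNormedRing (m := Fin d) (α := ℂ)
  let := Matrix.frobeniusNormedAlgebra (m := Fin d) (α := ℂ) (R := ℂ)
  have hexp := NormedSpace.exp_series_hasSum_exp' (𝕂 := ℂ) (z • bMat d n m)
  refine (Pi.hasSum.mp (Pi.hasSum.mp hexp m) n).unique ?_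
  rw [← zero_add (Complex.sinh z)]
  refine HasSum.even_add_odd ?_ ?_
  · simpa only [smul_pow, Matrix.smul_apply, bMat_pow_even_apply h, smul_zero] using hasSum_zero
  · convert Complex.hasSum_sinh z using 2 with k
    rw [smul_pow, bMat_pow_odd h]
    simp [bMat, h, div_eq_inv_mul]

end

def controlledHamiltonian (d : ℕ) (F : Fin d → ℝ) : Matrix (Fin d) (Fin d) ℂ :=
  tightBinding d + ∑ j : Fin d, ((F j : ℝ) : ℂ) • pMat d j

lemma tightBinding_succ (n : ℕ) :
    tightBinding (n + 1) =
      (1 / Real.sqrt (2 * n)) • ∑ m : Fin n, bMat (n + 1) m.castSucc m.succ := by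
  rw [tightBinding]
  push_cast
  simp only [add_sub_cancel_right]
  rfl

section

variable {ι : Type*} [Fintype ι]

def weightedPopulation (x : ι → ℝ) (ψ : ι → ℂ) : ℝ := ∑ j, x j * ‖ψ j‖ ^ 2

def populationRate (x : ι → ℝ) (ψ : ι → ℂ) : Matrix ι ι ℂ →ₗ[ℝ] ℝ where
  toFun H := 2 * ∑ j, x j * (star (ψ j) * (H *ᵥ ψ) j).im
  map_add' H K := by
    simp only [Matrix.add_mulVec, Pi.add_apply, mul_add, Complex.add_im, Finset.sum_add_distrib]
  map_smul' r H := by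
    simp only [Matrix.smul_mulVec, Pi.smul_apply, mul_smul_comm, Complex.smul_im, smul_eq_mul,
      RingHom.id_apply, Finset.mul_sum]
    exact Finset.sum_congr rfl fun j _ => by ring

lemma weightedPopulation_single [DecidableEq ι] (x : ι → ℝ) (i : ι) :
    weightedPopulation x (Pi.single i 1) = x i := by
  rw [weightedPopulation, Finset.sum_eq_single i (fun j _ hj => by simp [hj]) (by simp)]
  simp

lemma hasDerivAt_weightedPopulation (x : ι → ℝ) {ψ : ℝ → ι → ℂ} {H : Matrix ι ι ℂ} {t : ℝ}
    (hψ : HasDerivAt ψ ((-Complex.I) • (H *ᵥ ψ t)) t) :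
    HasDerivAt (fun s => weightedPopulation x (ψ s)) (populationRate x (ψ t) H) t := by
  have hj : ∀ j, HasDerivAt (fun s => x j * ‖ψ s j‖ ^ 2)
      (2 * (x j * (star (ψ t j) * (H *ᵥ ψ t) j).im)) t := by
    intro j
    refine ((hasDerivAt_pi.mp hψ j).norm_sq.const_mul (x j)).congr_deriv ?_
    simp only [Pi.smul_apply, Complex.inner, smul_eq_mul, Complex.mul_re, Complex.mul_im,
      Complex.neg_re, Complex.neg_im, Complex.I_re, Complex.I_im, RCLike.star_def,
      Complex.conj_re, Complex.conj_im]
    ring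
  exact (HasDerivAt.fun_sum (u := Finset.univ) fun j _ => hj j).congr_deriv
    (Finset.mul_sum _ _ _).symm

lemma populationRate_single [DecidableEq ι] (x : ι → ℝ) (ψ : ι → ℂ) (a b : ι) :
    populationRate x ψ (Matrix.single a b 1) = 2 * x a * (star (ψ a) * ψ b).im := by
  simp only [populationRate, LinearMap.coe_mk, AddHom.coe_mk, Matrix.single_mulVec, one_mul]
  rw [Finset.sum_eq_single a (fun j _ hj => by simp [hj]) (by simp)]
  simp only [Function.update_self, mul_assoc]

lemma hasDerivAt_column {U : ℝ → Matrix ι ι ℂ} {H : Matrix ι ι ℂ} {t : ℝ} (c : ι)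
    (hU : HasDerivAt U ((-Complex.I) • (H * U t)) t) :
    HasDerivAt (fun s j => U s j c) ((-Complex.I) • (H *ᵥ fun j => U t j c)) t :=
  hasDerivAt_pi.mpr fun j => hasDerivAt_pi.mp (hasDerivAt_pi.mp hU j) c

end

section

variable {d : ℕ} (x : Fin d → ℝ) (ψ : Fin d → ℂ)

lemma populationRate_pMat (j : Fin d) : populationRate x ψ (pMat d j) = 0 := by
  simp [pMat, populationRate_single, Complex.conj_mul', ← Complex.ofReal_pow]

lemma populationRate_bMat (a b : Fin d) :
    populationRate x ψ (bMat d a b) = 2 * (x a - x b) * (star (ψ a) * ψ b).im := by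
  have hswap : (star (ψ b) * ψ a).im = -(star (ψ a) * ψ b).im := by
    rw [← Complex.conj_im]
    simp [mul_comm]
  rw [bMat, map_add, populationRate_single, populationRate_single, hswap]
  ring

end

lemma populationRate_controlledHamiltonian (n : ℕ) (F x : Fin (n + 1) → ℝ)
    (ψ : Fin (n + 1) → ℂ) :
    populationRate x ψ (controlledHamiltonian (n + 1) F) =
      1 / Real.sqrt (2 * n) *
        ∑ m : Fin n, 2 * (x m.castSucc - x m.succ) * (star (ψ m.castSucc) * ψ m.succ).im := by
  simp [controlledHamiltonian, tightBinding_succ, map_sum, populationRate_bMat,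
    populationRate_pMat]

def chainWeight (n k : ℕ) : ℝ := ∑ m ∈ Finset.range k, Real.sqrt ((m + 1) * (n - m))

lemma chainWeight_nonneg (n k : ℕ) : 0 ≤ chainWeight n k :=
  Finset.sum_nonneg fun _ _ => Real.sqrt_nonneg _

lemma chainWeight_succ_sub (n k : ℕ) :
    chainWeight n (k + 1) - chainWeight n k = Real.sqrt ((k + 1) * (n - k)) := by
  rw [chainWeight, chainWeight, Finset.sum_range_succ, add_sub_cancel_left]

lemma mul_sqrt_le_chainWeight (n : ℕ) : n * Real.sqrt n ≤ chainWeight n n := by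
  have hterm : ∀ m ∈ Finset.range n, Real.sqrt n ≤ Real.sqrt ((m + 1) * (n - m)) := by
    intro m hm
    have hmn : (m : ℝ) + 1 ≤ n := by exact_mod_cast Finset.mem_range.mp hm
    exact Real.sqrt_le_sqrt (by nlinarith)
  simpa [chainWeight] using Finset.sum_le_sum hterm

lemma two_sqrt_mul_mul_abs_im_le {a b : ℝ} (ha : 0 ≤ a) (hb : 0 ≤ b) (z w : ℂ) :
    2 * Real.sqrt (a * b) * |(star z * w).im| ≤ a * ‖z‖ ^ 2 + b * ‖w‖ ^ 2 := by
  have him : |(star z * w).im| ≤ ‖z‖ * ‖w‖ := by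
    simpa using Complex.abs_im_le_norm (star z * w)
  calc 2 * Real.sqrt (a * b) * |(star z * w).im|
      ≤ 2 * (Real.sqrt a * ‖z‖) * (Real.sqrt b * ‖w‖) := by
        rw [Real.sqrt_mul ha]
        nlinarith [mul_nonneg (Real.sqrt_nonneg a) (Real.sqrt_nonneg b)]
    _ ≤ (Real.sqrt a * ‖z‖) ^ 2 + (Real.sqrt b * ‖w‖) ^ 2 := two_mul_le_add_sq _ _
    _ = a * ‖z‖ ^ 2 + b * ‖w‖ ^ 2 := by rw [mul_pow, mul_pow, Real.sq_sqrt ha, Real.sq_sqrt hb]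

lemma sum_mul_castSucc_add_mul_succ (n : ℕ) (p : Fin (n + 1) → ℝ) :
    ∑ m : Fin n, ((n - m) * p m.castSucc + ((m : ℝ) + 1) * p m.succ) = n * ∑ j, p j := by
  have hleft : ∑ m : Fin n, (n - m) * p m.castSucc = ∑ j : Fin (n + 1), (n - j) * p j := by
    simp [Fin.sum_univ_castSucc (fun j : Fin (n + 1) => ((n : ℝ) - j) * p j)]
  have hright : ∑ m : Fin n, ((m : ℝ) + 1) * p m.succ = ∑ j : Fin (n + 1), (j : ℝ) * p j := by
    simp [Fin.sum_univ_succ (fun j : Fin (n + 1) => (j : ℝ) * p j)]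
  rw [Finset.sum_add_distrib, hleft, hright, ← Finset.sum_add_distrib, Finset.mul_sum]
  exact Finset.sum_congr rfl fun j _ => by ring

lemma abs_sum_chainWeight_flux_le (n : ℕ) (ψ : Fin (n + 1) → ℂ) :
    |∑ m : Fin n, 2 * (chainWeight n m.castSucc - chainWeight n m.succ) *
        (star (ψ m.castSucc) * ψ m.succ).im| ≤
      n * weightedPopulation (fun _ => 1) ψ := by
  have hterm : ∀ m : Fin n,
      |2 * (chainWeight n m.castSucc - chainWeight n m.succ) * (star (ψ m.castSucc) * ψ m.succ).im|
        ≤ (n - m) * ‖ψ m.castSucc‖ ^ 2 + ((m : ℝ) + 1) * ‖ψ m.succ‖ ^ 2 := by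
    intro m
    have hm : (m : ℝ) + 1 ≤ n := by exact_mod_cast m.isLt
    rw [Fin.val_castSucc, Fin.val_succ, ← neg_sub, chainWeight_succ_sub, mul_comm ((m : ℝ) + 1),
      abs_mul, abs_mul, abs_neg, abs_of_nonneg (by positivity), abs_of_nonneg (by positivity)]
    exact two_sqrt_mul_mul_abs_im_le (by linarith) (by positivity) _ _
  calc _ ≤ _ := Finset.abs_sum_le_sum_abs _ _
    _ ≤ _ := Finset.sum_le_sum fun m _ => hterm m
    _ = _ := by
      simp [sum_mul_castSucc_add_mul_succ n fun j => ‖ψ j‖ ^ 2, weightedPopulation]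

section

variable {n : ℕ} {ψ : ℝ → Fin (n + 1) → ℂ} {F : ℝ → Fin (n + 1) → ℝ} {T : ℝ}

lemma weightedPopulation_one_eq
    (hψ : ∀ t ∈ Set.Icc 0 T,
      HasDerivAt ψ ((-Complex.I) • (controlledHamiltonian (n + 1) (F t) *ᵥ ψ t)) t) :
    ∀ t ∈ Set.Icc 0 T,
      weightedPopulation (fun _ => 1) (ψ t) = weightedPopulation (fun _ => 1) (ψ 0) := by
  intro t ht
  have h := (convex_Icc 0 T).norm_image_sub_le_of_norm_hasDerivWithin_le (C := 0)
    (fun s hs => (hasDerivAt_weightedPopulation (fun _ => 1) (hψ s hs)).hasDerivWithinAt)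
    (fun s _ => by simp [populationRate_controlledHamiltonian])
    (Set.left_mem_Icc.2 (ht.1.trans ht.2)) ht
  rwa [zero_mul, norm_le_zero_iff, sub_eq_zero] at h

lemma chainWeight_le_mul_of_transfer (hT : 0 ≤ T)
    (hψ : ∀ t ∈ Set.Icc 0 T,
      HasDerivAt ψ ((-Complex.I) • (controlledHamiltonian (n + 1) (F t) *ᵥ ψ t)) t)
    (hψ0 : ψ 0 = Pi.single 0 1) (hψT : ‖ψ T (Fin.last n)‖ = 1) :
    chainWeight n n ≤ 1 / Real.sqrt (2 * n) * n * T := by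
  set w : Fin (n + 1) → ℝ := fun j => chainWeight n j
  have hnorm : ∀ t ∈ Set.Icc 0 T, weightedPopulation (fun _ => 1) (ψ t) = 1 := fun t ht => by
    rw [weightedPopulation_one_eq hψ t ht, hψ0, weightedPopulation_single]
  have hrate : ∀ t ∈ Set.Icc 0 T,
      ‖populationRate w (ψ t) (controlledHamiltonian (n + 1) (F t))‖ ≤
        1 / Real.sqrt (2 * n) * n := by
    intro t ht
    rw [populationRate_controlledHamiltonian, Real.norm_eq_abs, abs_mul,
      abs_of_nonneg (by positivity)]
    gcongr
    simpa [w, hnorm t ht] using abs_sum_chainWeight_flux_le n (ψ t)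
  have hmvt := (convex_Icc 0 T).norm_image_sub_le_of_norm_hasDerivWithin_le
    (fun s hs => (hasDerivAt_weightedPopulation w (hψ s hs)).hasDerivWithinAt) hrate
    (Set.left_mem_Icc.2 hT) (Set.right_mem_Icc.2 hT)
  have hG0 : weightedPopulation w (ψ 0) = 0 := by
    simp [w, hψ0, weightedPopulation_single, chainWeight]
  have hGT : chainWeight n n ≤ weightedPopulation w (ψ T) := by
    simpa [w, hψT, weightedPopulation] using Finset.single_le_sum
      (f := fun j => w j * ‖ψ T j‖ ^ 2)
      (fun j _ => mul_nonneg (chainWeight_nonneg _ _) (sq_nonneg _)) (Finset.mem_univ (Fin.last n))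
  rw [hG0, sub_zero, sub_zero, Real.norm_of_nonneg hT] at hmvt
  exact hGT.trans ((Real.le_norm_self _).trans hmvt)

end

lemma sqrt_two_mul_le_of_mul_sqrt_le {n T : ℝ} (hn : 0 < n)
    (h : n * Real.sqrt n ≤ 1 / Real.sqrt (2 * n) * n * T) : Real.sqrt 2 * n ≤ T := by
  rw [Real.sqrt_mul zero_le_two, div_mul_eq_mul_div, div_mul_eq_mul_div, one_mul,
    le_div_iff₀ (by positivity)] at h
  have h' : n * (Real.sqrt 2 * n) ≤ n * T := by
    linear_combination h - n * Real.sqrt 2 * Real.mul_self_sqrt hn.le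
  exact le_of_mul_le_mul_left h' hn

/-- **Lower bound for the SWAP gate in the tight-binding system.** If the controlled
tight-binding system implements the SWAP operation `exp(−i(π/2)B_{0,d−1})` between the
first and the last level at time `T`, then `T ≥ √2 (d−1)`. -/
theorem swap_lower_bound (d : ℕ) (hd : 2 ≤ d)
    (f : ℝ → Fin d → ℝ) (T : ℝ) (hT : 0 ≤ T)
    (U : ℝ → Matrix (Fin d) (Fin d) ℂ) (hU0 : U 0 = 1)
    (hU : ∀ t ∈ Set.Icc (0 : ℝ) T,
      HasDerivAt U
        ((-Complex.I) •
          ((tightBinding d + ∑ j : Fin d, ((f t j : ℝ) : ℂ) • pMat d j) * U t)) t)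
    (hUT : U T = NormedSpace.exp ((-(Complex.I * ((Real.pi / 2 : ℝ) : ℂ))) •
      bMat d ⟨0, by omega⟩ ⟨d - 1, by omega⟩)) :
    Real.sqrt 2 * ((d : ℝ) - 1) ≤ T := by
  obtain ⟨n, rfl⟩ : ∃ n, d = n + 1 := ⟨d - 1, by omega⟩
  have hn : (0 : ℝ) < n := by exact_mod_cast (by omega : 0 < n)
  have hfirst : (⟨0, by omega⟩ : Fin (n + 1)) = 0 := rfl
  have hlast : (⟨n + 1 - 1, by omega⟩ : Fin (n + 1)) = Fin.last n := Fin.ext (by simp)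
  have hne : (0 : Fin (n + 1)) ≠ Fin.last n := by simp [Fin.ext_iff]; omega
  have hψT : ‖U T (Fin.last n) 0‖ = 1 := by
    rw [hUT, hfirst, hlast, exp_smul_bMat_apply hne]
    simp [mul_comm Complex.I, Complex.sinh_mul_I]
  have key := chainWeight_le_mul_of_transfer (ψ := fun s j => U s j 0) (F := f) hT
    (fun t ht => hasDerivAt_column 0 (hU t ht))
    (by ext j; simp [hU0, Matrix.one_apply, Pi.single_apply]) hψT
  have hbound := sqrt_two_mul_le_of_mul_sqrt_le hn ((mul_sqrt_le_chainWeight n).trans key)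
  push_cast
  rwa [add_sub_cancel_right]

end
end

section
/- For every n ∈ ℕ and every x : Fin n → ℝ, one has 1 − cos(Σ_{i} x_i) ≤ n · Σ_{i} (1 − cos x_i). Equivalently, the ratio S(x₁,…,x_n) := (1 − cos(Σ_i x_i)) / (1 − (1/n) Σ_i cos x_i) is bounded above by n² whenever its denominator is positive. -/
/-!
With `1 - cos x = 2 sin² (x / 2)`, the claim says `sin² (∑ xᵢ / 2) ≤ n ∑ sin² (xᵢ / 2)`. The addition
formula makes `|sin|` subadditive, so `|sin (∑ xᵢ / 2)| ≤ ∑ |sin (xᵢ / 2)|`, and Cauchy–Schwarz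
bounds the square of that sum by `n ∑ sin² (xᵢ / 2)`. The bound on the ratio is the same inequality
divided by `(1 / n) ∑ (1 - cos xᵢ)`.
-/

open Finset Real

lemma Real.abs_sin_add_le (x y : ℝ) : |sin (x + y)| ≤ |sin x| + |sin y| := by
  rw [sin_add]
  refine (abs_add_le _ _).trans (add_le_add ?_ ?_)
  · rw [abs_mul]
    exact mul_le_of_le_one_right (abs_nonneg _) (abs_cos_le_one _)
  · rw [abs_mul]
    exact mul_le_of_le_one_left (abs_nonneg _) (abs_cos_le_one _)

lemma Real.abs_sin_sum_le {ι : Type*} (s : Finset ι) (f : ι → ℝ) :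
    |sin (∑ i ∈ s, f i)| ≤ ∑ i ∈ s, |sin (f i)| := by
  classical
  induction s using Finset.induction_on with
  | empty => simp
  | insert a s ha ih =>
    rw [sum_insert ha, sum_insert ha]
    exact (abs_sin_add_le _ _).trans (add_le_add_right ih _)

lemma Real.one_sub_cos_eq_two_mul_sin_sq (x : ℝ) : 1 - cos x = 2 * sin (x / 2) ^ 2 := by
  rw [sin_sq_eq_half_sub, mul_div_cancel₀ x two_ne_zero]
  ring

lemma Real.one_sub_cos_sum_le_card_mul {ι : Type*} (s : Finset ι) (f : ι → ℝ) :
    1 - cos (∑ i ∈ s, f i) ≤ #s * ∑ i ∈ s, (1 - cos (f i)) := by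
  have h_sin : |sin ((∑ i ∈ s, f i) / 2)| ≤ ∑ i ∈ s, |sin (f i / 2)| := by
    rw [sum_div]
    exact abs_sin_sum_le s _
  have h_cauchy_schwarz := sq_sum_le_card_mul_sum_sq (s := s) (f := fun i ↦ |sin (f i / 2)|)
  simp only [sq_abs] at h_cauchy_schwarz
  have h_sq : sin ((∑ i ∈ s, f i) / 2) ^ 2 ≤ (∑ i ∈ s, |sin (f i / 2)|) ^ 2 :=
    sq_le_sq' (abs_le.mp h_sin).1 (abs_le.mp h_sin).2
  simp only [one_sub_cos_eq_two_mul_sin_sq, ← mul_sum]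
  linarith [h_sq.trans h_cauchy_schwarz]

/-- The maximization bound for the ratio `S`:
`1 − cos(∑ᵢ xᵢ) ≤ n ∑ᵢ (1 − cos xᵢ)`; equivalently, whenever its denominator is positive,
`S(x₁,…,x_n) = (1 − cos(∑ᵢ xᵢ))/(1 − (1/n)∑ᵢ cos xᵢ) ≤ n²`. -/
theorem one_sub_cos_sum_le (n : ℕ) (x : Fin n → ℝ) :
    (1 - Real.cos (∑ i, x i) ≤ (n : ℝ) * ∑ i, (1 - Real.cos (x i))) ∧
    (0 < 1 - (1 / (n : ℝ)) * ∑ i, Real.cos (x i) →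
      (1 - Real.cos (∑ i, x i)) / (1 - (1 / (n : ℝ)) * ∑ i, Real.cos (x i)) ≤
        (n : ℝ) ^ 2) := by
  have key : 1 - cos (∑ i, x i) ≤ n * ∑ i, (1 - cos (x i)) := by
    simpa using one_sub_cos_sum_le_card_mul univ x
  refine ⟨key, fun hpos ↦ ?_⟩
  rcases n.eq_zero_or_pos with rfl | hn
  · simp
  have hn' : (0 : ℝ) < n := Nat.cast_pos.mpr hn
  have h_denom : 1 - 1 / (n : ℝ) * ∑ i, cos (x i) = 1 / n * ∑ i, (1 - cos (x i)) := by
    rw [sum_sub_distrib]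
    field_simp
    simp
  rw [div_le_iff₀ hpos, h_denom]
  calc 1 - cos (∑ i, x i) ≤ n * ∑ i, (1 - cos (x i)) := key
    _ = (n : ℝ) ^ 2 * (1 / n * ∑ i, (1 - cos (x i))) := by field_simp
end
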